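/- Let n be a positive integer and let a, r be non-negative integers with a ≤ n. Then for j = 0 and for j = 1, the polynomial Σ_{k=a}^{n} [2k]·[k]^{2r}·q^{(r+1)(n−k) + j k²}·qbinom(2n, n−k) is divisible by [n+a]·qbinom(2n, n−a) in ℤ[q]. -/
import Mathlib


open Polynomial

/-- The Gaussian (`q`-)binomial coefficient `qbinom n k` as a polynomial in `q = X`
with integer coefficients; it is `0` for `k > n`. -/
noncomputable def qbinom : ℕ → ℕ → Polynomial ℤ
  | _, 0 => 1
  | 0, _ + 1 => 0
  | n + 1, k + 1 => qbinom n k + X ^ (k + 1) * qbinom n (k + 1)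

/-- The `q`-integer `[n] = 1 + q + ⋯ + q^{n-1}` as a polynomial in `q = X`. -/
noncomputable def qint (n : ℕ) : Polynomial ℤ := ∑ i ∈ Finset.range n, X ^ i


open Finset
noncomputable def qfact : ℕ → Polynomial ℤ
  | 0 => 1
  | n + 1 => qfact n * qint (n + 1)

lemma qbinom_zero (n : ℕ) : qbinom n 0 = 1 := by cases n <;> rfl
lemma qbinom_succ (n k : ℕ) : qbinom (n+1) (k+1) = qbinom n k + X ^ (k + 1) * qbinom n (k + 1) := rfl
lemma qbinom_of_lt : ∀ {n k : ℕ}, n < k → qbinom n k = 0 := by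
  intro n
  induction n with
  | zero => intro k hk; match k, hk with | k+1, _ => rfl
  | succ n ih =>
    intro k hk
    match k, hk with
    | k+1, hk =>
      rw [qbinom_succ, ih (by omega), ih (by omega)]
      ring
lemma qint_add (a b : ℕ) : qint (a + b) = qint a + X ^ a * qint b := by
  simp [qint, Finset.sum_range_add, Finset.mul_sum, pow_add]
lemma qint_ne_zero {n : ℕ} (h : 0 < n) : qint n ≠ 0 := by
  intro hc
  have := congrArg (Polynomial.eval 1) hc
  simp [qint, Polynomial.eval_finset_sum] at this
  omega
lemma qfact_ne_zero (n : ℕ) : qfact n ≠ 0 := by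
  induction n with
  | zero => simp [qfact]
  | succ n ih => exact mul_ne_zero ih (qint_ne_zero (by omega))

lemma qfact_mul_qbinom : ∀ m s : ℕ, s ≤ m → qfact s * qfact (m - s) * qbinom m s = qfact m := by
  intro m
  induction m with
  | zero => intro s hs; interval_cases s; simp [qfact, qbinom_zero]
  | succ m ih =>
    intro s hs
    match s with
    | 0 => simp [qfact, qbinom_zero]
    | s + 1 =>
      have hs' : s ≤ m := by omega
      rw [qbinom_succ]
      have h1 : qfact (s+1) * qfact (m + 1 - (s+1)) * qbinom m s
          = qint (s+1) * qfact m := by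
        have : m + 1 - (s+1) = m - s := by omega
        rw [this, show qfact (s+1) = qfact s * qint (s+1) from rfl]
        rw [show qfact s * qint (s+1) * qfact (m-s) * qbinom m s
            = qint (s+1) * (qfact s * qfact (m-s) * qbinom m s) by ring, ih s hs']
      have h2 : qfact (s+1) * qfact (m + 1 - (s+1)) * (X ^ (s+1) * qbinom m (s+1))
          = X ^ (s+1) * qint (m - s) * qfact m := by
        rcases Nat.lt_or_ge s m with h | h
        · have e : m + 1 - (s+1) = (m - s - 1) + 1 := by omega
          have e2 : m - (s+1) = m - s - 1 := by omega
          rw [e, show qfact ((m-s-1)+1) = qfact (m-s-1) * qint ((m-s-1)+1) from rfl,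
            show (m-s-1)+1 = m-s from by omega]
          have := ih (s+1) (by omega)
          rw [e2] at this
          calc qfact (s+1) * (qfact (m-s-1) * qint (m-s)) * (X ^ (s+1) * qbinom m (s+1))
              = X ^ (s+1) * qint (m-s) * (qfact (s+1) * qfact (m-s-1) * qbinom m (s+1)) := by ring
            _ = X ^ (s+1) * qint (m - s) * qfact m := by rw [this]
        · have hsm : s = m := by omega
          subst hsm
          rw [qbinom_of_lt (by omega)]
          simp [qint]
      rw [mul_add, h1, h2]
      have hq := qint_add (s+1) (m-s)
      rw [show (s+1)+(m-s) = m+1 from by omega] at hq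
      rw [show qfact (m+1) = qfact m * qint (m+1) from rfl, hq]
      ring

lemma absorption1 (m s : ℕ) (h : s ≤ m) :
    qint (s+1) * qbinom (m+1) (s+1) = qint (m+1) * qbinom m s := by
  apply mul_left_cancel₀ (mul_ne_zero (qfact_ne_zero s) (qfact_ne_zero (m - s)))
  calc qfact s * qfact (m-s) * (qint (s+1) * qbinom (m+1) (s+1))
      = qfact (s+1) * qfact ((m+1) - (s+1)) * qbinom (m+1) (s+1) := by
        rw [show qfact (s+1) = qfact s * qint (s+1) from rfl,
          show (m+1)-(s+1) = m - s from by omega]; ring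
    _ = qfact (m+1) := qfact_mul_qbinom (m+1) (s+1) (by omega)
    _ = qint (m+1) * qfact m := by rw [show qfact (m+1) = qfact m * qint (m+1) from rfl]; ring
    _ = qfact s * qfact (m-s) * (qint (m+1) * qbinom m s) := by
        rw [show qfact s * qfact (m-s) * (qint (m+1) * qbinom m s)
          = qint (m+1) * (qfact s * qfact (m-s) * qbinom m s) by ring, qfact_mul_qbinom m s h]

lemma absorption2 (m s : ℕ) (h : s ≤ m) :
    qint (m+1-s) * qbinom (m+1) s = qint (m+1) * qbinom m s := by
  apply mul_left_cancel₀ (mul_ne_zero (qfact_ne_zero s) (qfact_ne_zero (m - s)))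
  calc qfact s * qfact (m-s) * (qint (m+1-s) * qbinom (m+1) s)
      = qfact s * qfact ((m+1) - s) * qbinom (m+1) s := by
        rw [show (m+1)-s = (m-s)+1 from by omega,
          show qfact ((m-s)+1) = qfact (m-s) * qint ((m-s)+1) from rfl,
          show (m-s)+1 = m+1-s from by omega]; ring
    _ = qfact (m+1) := qfact_mul_qbinom (m+1) s (by omega)
    _ = qint (m+1) * qfact m := by rw [show qfact (m+1) = qfact m * qint (m+1) from rfl]; ring
    _ = qfact s * qfact (m-s) * (qint (m+1) * qbinom m s) := by
        rw [show qfact s * qfact (m-s) * (qint (m+1) * qbinom m s)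
          = qint (m+1) * (qfact s * qfact (m-s) * qbinom m s) by ring, qfact_mul_qbinom m s h]

-- core quadratic identity: [n']² − X^{n'−k}[k]² = [n'+k][n'−k]  (k ≤ n')
lemma qint_sq_sub (n' k : ℕ) (h : k ≤ n') :
    qint n' ^ 2 - X ^ (n' - k) * qint k ^ 2 = qint (n' + k) * qint (n' - k) := by
  obtain ⟨u, rfl⟩ : ∃ u, n' = k + u := ⟨n' - k, by omega⟩
  have hu : k + u - k = u := by omega
  rw [hu]
  have hX : ((X : Polynomial ℤ) - 1) ≠ 0 := by simpa using X_sub_C_ne_zero (1:ℤ)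
  refine mul_right_cancel₀ (b := ((X : Polynomial ℤ) - 1)^2) (pow_ne_zero 2 hX) ?_
  have hm : ∀ m : ℕ, qint m * (X - 1) = X ^ m - 1 := fun m => geom_sum_mul X m
  calc (qint (k+u) ^ 2 - X ^ u * qint k ^ 2) * (X - 1)^2
      = (qint (k+u) * (X-1))^2 - X ^ u * (qint k * (X-1))^2 := by ring
    _ = (X^(k+u) - 1)^2 - X ^ u * (X^k - 1)^2 := by rw [hm, hm]
    _ = (X^(k+u+k) - 1) * (X^u - 1) := by rw [pow_add, pow_add, pow_add]; ring
    _ = (qint (k+u+k) * (X-1)) * (qint u * (X-1)) := by rw [hm, hm]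
    _ = qint (k+u+k) * qint u * (X-1)^2 := by ring

lemma lemB (n k : ℕ) : ∀ t, t + k ≤ n →
    (∏ s ∈ range t, (qint (n+k-s) * qint (n-k-s))) * qbinom (2*n) (n-k)
      = (∏ i ∈ range (2*t), qint (2*n - i)) * qbinom (2*n - 2*t) (n - t - k) := by
  intro t
  induction t with
  | zero => intro h; simp
  | succ t ih =>
    intro h
    have h' : t + k ≤ n := by omega
    rw [Finset.prod_range_succ, show (∏ s ∈ range t, (qint (n+k-s) * qint (n-k-s))) *
        (qint (n+k-t) * qint (n-k-t)) * qbinom (2*n) (n-k)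
      = (qint (n+k-t) * qint (n-k-t)) * ((∏ s ∈ range t, (qint (n+k-s) * qint (n-k-s))) *
        qbinom (2*n) (n-k)) by ring, ih h']
    -- now: [n+k-t] * [n-k-t] * (E_t * qbinom (2n-2t) (n-t-k))
    have hab1 : qint (n-k-t) * qbinom (2*n-2*t) (n-t-k)
        = qint (2*n-2*t) * qbinom (2*n-2*t-1) (n-t-k-1) := by
      have := absorption1 (2*n-2*t-1) (n-t-k-1) (by omega)
      rw [show n-t-k-1+1 = n-t-k from by omega, show 2*n-2*t-1+1 = 2*n-2*t from by omega] at this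
      rw [show n-k-t = n-t-k from by omega, this]
    have hab2 : qint (n+k-t) * qbinom (2*n-2*t-1) (n-t-k-1)
        = qint (2*n-2*t-1) * qbinom (2*n-2*t-2) (n-t-k-1) := by
      have := absorption2 (2*n-2*t-2) (n-t-k-1) (by omega)
      rw [show 2*n-2*t-2+1-(n-t-k-1) = n+k-t from by omega,
        show 2*n-2*t-2+1 = 2*n-2*t-1 from by omega] at this
      exact this
    calc qint (n+k-t) * qint (n-k-t) * ((∏ i ∈ range (2*t), qint (2*n - i)) *
          qbinom (2*n-2*t) (n-t-k))
        = (∏ i ∈ range (2*t), qint (2*n - i)) * qint (n+k-t) *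
          (qint (n-k-t) * qbinom (2*n-2*t) (n-t-k)) := by ring
      _ = (∏ i ∈ range (2*t), qint (2*n - i)) * qint (2*n-2*t) *
          (qint (n+k-t) * qbinom (2*n-2*t-1) (n-t-k-1)) := by rw [hab1]; ring
      _ = (∏ i ∈ range (2*t), qint (2*n - i)) * qint (2*n-2*t) *
          (qint (2*n-2*t-1) * qbinom (2*n-2*t-2) (n-t-k-1)) := by rw [hab2]
      _ = (∏ i ∈ range (2*(t+1)), qint (2*n - i)) * qbinom (2*n-2*(t+1)) (n-(t+1)-k) := by
          rw [show 2*n-2*(t+1) = 2*n-2*t-2 from by omega,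
            show n-(t+1)-k = n-t-k-1 from by omega,
            show 2*(t+1) = (2*t+1)+1 from by omega, Finset.prod_range_succ,
            Finset.prod_range_succ,
            show 2*n-(2*t+1) = 2*n-2*t-1 from by omega]
          ring

noncomputable def dd (n : ℕ) : ℕ → ℕ → Polynomial ℤ
  | 0, 0 => 1
  | 0, _+1 => 0
  | r+1, 0 => qint n ^ 2 * dd n r 0
  | r+1, t+1 => X^(t+1) * qint (n-(t+1))^2 * dd n r (t+1) - dd n r t

lemma dd_of_gt (n : ℕ) : ∀ r t, r < t → dd n r t = 0 := by
  intro r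
  induction r with
  | zero => intro t ht; match t, ht with | t+1, _ => rfl
  | succ r ih =>
    intro t ht
    match t, ht with
    | t+1, ht =>
      show X^(t+1) * qint (n-(t+1))^2 * dd n r (t+1) - dd n r t = 0
      rw [ih (t+1) (by omega), ih t (by omega)]
      ring

lemma G_vanish (n k t : ℕ) (h1 : k ≤ n) (h2 : n < k + t) :
    ∏ s ∈ range t, (X^s * qint (n-s)^2 - X^(n-k) * qint k^2) = 0 := by
  apply Finset.prod_eq_zero (i := n - k) (Finset.mem_range.2 (by omega))
  rw [show n - (n - k) = k from by omega]
  ring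

lemma G_form (n k t : ℕ) (h : t + k ≤ n) :
    ∏ s ∈ range t, (X^s * qint (n-s)^2 - X^(n-k) * qint k^2)
      = X ^ (∑ s ∈ range t, s) * ∏ s ∈ range t, (qint (n+k-s) * qint (n-k-s)) := by
  rw [← Finset.prod_pow_eq_pow_sum, ← Finset.prod_mul_distrib]
  apply Finset.prod_congr rfl
  intro s hs
  have hs' : s + k ≤ n := by have := Finset.mem_range.1 hs; omega
  have core := qint_sq_sub (n - s) k (by omega)
  rw [show n - s - k = n - k - s from by omega, show n - s + k = n + k - s from by omega] at core
  calc X^s * qint (n-s)^2 - X^(n-k) * qint k^2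
      = X^s * (qint (n-s)^2 - X^(n-k-s) * qint k^2) := by
        rw [mul_sub, ← mul_assoc, ← pow_add, show s + (n-k-s) = n-k from by omega]
    _ = X^s * (qint (n+k-s) * qint (n-k-s)) := by rw [core]
    _ = X^s * (qint (n+k-s) * qint (n-k-s)) := rfl

lemma expand (n k : ℕ) : ∀ r : ℕ,
    (X^(n-k) * qint k ^ 2)^r
      = ∑ t ∈ range (r+1), dd n r t *
          ∏ s ∈ range t, (X^s * qint (n-s)^2 - X^(n-k) * qint k^2) := by
  intro r
  induction r with
  | zero => simp [dd]
  | succ r ih =>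
    set y : Polynomial ℤ := X^(n-k) * qint k ^ 2 with hy
    set G : ℕ → Polynomial ℤ := fun t => ∏ s ∈ range t, (X^s * qint (n-s)^2 - y) with hG
    have hyG : ∀ t, y * G t = X^t * qint (n-t)^2 * G t - G (t+1) := by
      intro t
      have : G (t+1) = G t * (X^t * qint (n-t)^2 - y) := Finset.prod_range_succ _ t
      rw [this]; ring
    calc y^(r+1) = y * y^r := by ring
      _ = y * ∑ t ∈ range (r+1), dd n r t * G t := by rw [ih]
      _ = ∑ t ∈ range (r+1), dd n r t * (X^t * qint (n-t)^2 * G t - G (t+1)) := by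
          rw [Finset.mul_sum]; exact Finset.sum_congr rfl fun t _ => by rw [← hyG]; ring
      _ = (∑ t ∈ range (r+1), X^t * qint (n-t)^2 * dd n r t * G t)
            - ∑ t ∈ range (r+1), dd n r t * G (t+1) := by
          rw [← Finset.sum_sub_distrib]; exact Finset.sum_congr rfl fun t _ => by ring
      _ = ∑ t ∈ range (r+2), dd n (r+1) t * G t := by
          rw [Finset.sum_range_succ' (fun t => dd n (r+1) t * G t) (r+1)]
          have e0 : dd n (r+1) 0 * G 0 = qint n ^2 * dd n r 0 * G 0 := by
            rw [show dd n (r+1) 0 = qint n ^2 * dd n r 0 from rfl]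
          have e1 : ∀ t, dd n (r+1) (t+1) * G (t+1)
              = X^(t+1) * qint (n-(t+1))^2 * dd n r (t+1) * G (t+1) - dd n r t * G (t+1) := by
            intro t
            rw [show dd n (r+1) (t+1)
              = X^(t+1) * qint (n-(t+1))^2 * dd n r (t+1) - dd n r t from rfl]
            ring
          rw [Finset.sum_congr rfl (fun t _ => e1 t), Finset.sum_sub_distrib]
          rw [Finset.sum_range_succ (fun t => X^(t+1) * qint (n-(t+1))^2 * dd n r (t+1) * G (t+1)) r]
          rw [dd_of_gt n r (r+1) (by omega)]
          rw [Finset.sum_range_succ' (fun t => X^t * qint (n-t)^2 * dd n r t * G t) r]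
          simp only [pow_zero, Nat.sub_zero, one_mul]
          rw [e0]
          ring

lemma lemC_key (m a : ℕ) (h : a < m) :
    qint (m-a) * qbinom (2*m) (m-a) = qint (m+a+1) * qbinom (2*m) (m-a-1) := by
  have h1 := absorption1 (2*m-1) (m-a-1) (by omega)
  rw [show m-a-1+1 = m-a from by omega, show 2*m-1+1 = 2*m from by omega] at h1
  have h2 := absorption2 (2*m-1) (m-a-1) (by omega)
  rw [show 2*m-1+1-(m-a-1) = m+a+1 from by omega, show 2*m-1+1 = 2*m from by omega] at h2
  rw [h1, h2]

lemma lemC (j : ℕ) (hj : j ≤ 1) : ∀ d m a : ℕ, m = a + d →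
    ∑ k ∈ Finset.Icc a m, qint (2*k) * X^((m-k) + j*k^2) * qbinom (2*m) (m-k)
      = X^(j*((m-a) + a^2)) * (qint (m+a) * qbinom (2*m) (m-a)) := by
  intro d
  induction d with
  | zero =>
    intro m a hm
    subst hm
    simp only [Nat.add_zero, Finset.Icc_self, Finset.sum_singleton, Nat.sub_self]
    rw [qbinom_zero]
    ring_nf
  | succ d ih =>
    intro m a hm
    have ham : a < m := by omega
    have hins : Finset.Icc a m = insert a (Finset.Icc (a+1) m) := by
      ext x; simp only [Finset.mem_Icc, Finset.mem_insert]; omega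
    rw [hins, Finset.sum_insert (by simp)]
    rw [ih m (a+1) (by omega)]
    have key := lemC_key m a ham
    rw [show m - (a+1) = m-a-1 from by omega, show m + (a+1) = m+a+1 from by omega]
    interval_cases j
    · simp only [Nat.zero_mul, pow_zero, one_mul]
      have hadd : qint (m+a) = qint (m-a) + X^(m-a) * qint (2*a) := by
        have := qint_add (m-a) (2*a)
        rw [show m-a+2*a = m+a from by omega] at this
        exact this
      linear_combination (-(qbinom (2*m) (m-a))) * hadd - key
    · simp only [Nat.one_mul, one_mul]
      have hadd2 : qint (m+a) = qint (2*a) + X^(2*a) * qint (m-a) := by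
        have := qint_add (2*a) (m-a)
        rw [show 2*a+(m-a) = m+a from by omega] at this
        exact this
      rw [show (m-a-1) + (a+1)^2 = ((m-a)+a^2) + 2*a from by
        have h1 : (a+1)^2 = a^2 + 2*a + 1 := by ring
        omega, pow_add]
      linear_combination (-(X^((m-a)+a^2) * qbinom (2*m) (m-a))) * hadd2
        - X^((m-a)+a^2) * X^(2*a) * key

/-- Theorem 4.1 of the paper: for `j = 0, 1`, the polynomial
`∑_{k=a}^{n} [2k]·[k]^{2r}·q^{(r+1)(n-k)+jk²}·qbinom(2n, n-k)` is divisible by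
`[n+a]·qbinom(2n, n-a)` in `ℤ[q]`. -/
theorem stmt12 (n a r : ℕ) (hn : 0 < n) (ha : a ≤ n) (j : ℕ) (hj : j ≤ 1) :
    qint (n + a) * qbinom (2 * n) (n - a) ∣
      ∑ k ∈ Finset.Icc a n,
        qint (2 * k) * qint k ^ (2 * r) * X ^ ((r + 1) * (n - k) + j * k ^ 2) *
          qbinom (2 * n) (n - k) := by
  have hterm : ∀ k ∈ Finset.Icc a n,
      qint (2 * k) * qint k ^ (2 * r) * X ^ ((r + 1) * (n - k) + j * k ^ 2) *
          qbinom (2 * n) (n - k)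
        = ∑ t ∈ range (r+1), dd n r t *
            (qint (2*k) * X^((n-k) + j*k^2) *
              ((∏ s ∈ range t, (X^s * qint (n-s)^2 - X^(n-k) * qint k^2)) *
                qbinom (2*n) (n-k))) := by
    intro k hk
    calc qint (2 * k) * qint k ^ (2 * r) * X ^ ((r + 1) * (n - k) + j * k ^ 2) *
          qbinom (2 * n) (n - k)
        = (qint (2*k) * X^((n-k) + j*k^2)) *
            ((X^(n-k) * qint k ^ 2)^r * qbinom (2*n) (n-k)) := by
          rw [show (r+1)*(n-k) + j*k^2 = ((n-k) + j*k^2) + (n-k)*r from by ring,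
            pow_add, mul_pow, ← pow_mul, ← pow_mul]
          ring
      _ = (qint (2*k) * X^((n-k) + j*k^2)) *
            ((∑ t ∈ range (r+1), dd n r t *
              ∏ s ∈ range t, (X^s * qint (n-s)^2 - X^(n-k) * qint k^2)) *
                qbinom (2*n) (n-k)) := by rw [expand n k r]
      _ = _ := by
          rw [Finset.sum_mul, Finset.mul_sum]
          exact Finset.sum_congr rfl fun t _ => by ring
  rw [Finset.sum_congr rfl hterm, Finset.sum_comm]
  apply Finset.dvd_sum
  intro t ht
  have inner : qint (n + a) * qbinom (2 * n) (n - a) ∣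
      ∑ k ∈ Finset.Icc a n, qint (2*k) * X^((n-k) + j*k^2) *
        ((∏ s ∈ range t, (X^s * qint (n-s)^2 - X^(n-k) * qint k^2)) *
          qbinom (2*n) (n-k)) := by
    rcases Nat.lt_or_ge n (t + a) with hlt | hge
    · rw [Finset.sum_eq_zero]
      · exact dvd_zero _
      intro k hk
      obtain ⟨hak, hkn⟩ := Finset.mem_Icc.1 hk
      rw [G_vanish n k t hkn (by omega)]
      ring
    · -- t + a ≤ n
      have hsub : Finset.Icc a (n-t) ⊆ Finset.Icc a n := by
        apply Finset.Icc_subset_Icc_right; omega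
      have hvan : ∀ k ∈ Finset.Icc a n, k ∉ Finset.Icc a (n-t) →
          qint (2*k) * X^((n-k) + j*k^2) *
            ((∏ s ∈ range t, (X^s * qint (n-s)^2 - X^(n-k) * qint k^2)) *
              qbinom (2*n) (n-k)) = 0 := by
        intro k hk hk'
        obtain ⟨hak, hkn⟩ := Finset.mem_Icc.1 hk
        have : n - t < k := by
          simp only [Finset.mem_Icc, not_and, not_le] at hk'
          exact hk' hak
        rw [G_vanish n k t hkn (by omega)]
        ring
      have hstep : ∀ k ∈ Finset.Icc a (n-t),
          qint (2*k) * X^((n-k) + j*k^2) *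
            ((∏ s ∈ range t, (X^s * qint (n-s)^2 - X^(n-k) * qint k^2)) *
              qbinom (2*n) (n-k))
          = (X^(∑ s ∈ range t, s) * X^t * ∏ i ∈ range (2*t), qint (2*n - i)) *
              (qint (2*k) * X^(((n-t)-k) + j*k^2) * qbinom (2*(n-t)) ((n-t)-k)) := by
        intro k hk
        obtain ⟨hak, hkm⟩ := Finset.mem_Icc.1 hk
        have htk : t + k ≤ n := by omega
        rw [G_form n k t htk,
          show (X^(∑ s ∈ range t, s) * ∏ s ∈ range t, (qint (n+k-s) * qint (n-k-s))) *
              qbinom (2*n) (n-k)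
            = X^(∑ s ∈ range t, s) *
              ((∏ s ∈ range t, (qint (n+k-s) * qint (n-k-s))) * qbinom (2*n) (n-k)) from by
            ring,
          lemB n k t htk, show 2*n - 2*t = 2*(n-t) from by omega,
          show (n-k) + j*k^2 = t + (((n-t)-k) + j*k^2) from by omega, pow_add]
        ring
      have hsum2 : ∑ k ∈ Finset.Icc a n, qint (2*k) * X^((n-k) + j*k^2) *
            ((∏ s ∈ range t, (X^s * qint (n-s)^2 - X^(n-k) * qint k^2)) *
              qbinom (2*n) (n-k))
          = (X^(∑ s ∈ range t, s) * X^t * ∏ i ∈ range (2*t), qint (2*n - i)) *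
              (X^(j*(((n-t)-a) + a^2)) *
                (qint ((n-t)+a) * qbinom (2*(n-t)) ((n-t)-a))) := by
        rw [← Finset.sum_subset hsub hvan, Finset.sum_congr rfl hstep, ← Finset.mul_sum,
          lemC j hj ((n-t)-a) (n-t) a (by omega)]
      rw [hsum2]
      have hBa := lemB n a t (by omega)
      rw [show 2*n - 2*t = 2*(n-t) from by omega] at hBa
      rcases Nat.eq_zero_or_pos t with ht0 | ht1
      · subst ht0
        simp only [Finset.range_zero, Finset.sum_empty, Finset.prod_empty, pow_zero,
          Nat.mul_zero, Nat.sub_zero, one_mul, mul_one]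
        exact dvd_mul_left _ _
      · obtain ⟨t', rfl⟩ : ∃ t', t = t'+1 := ⟨t-1, by omega⟩
        have key : (X^(∑ s ∈ range (t'+1), s) * X^(t'+1) *
              ∏ i ∈ range (2*(t'+1)), qint (2*n - i)) *
              (X^(j*(((n-(t'+1))-a) + a^2)) *
                (qint ((n-(t'+1))+a) * qbinom (2*(n-(t'+1))) ((n-(t'+1))-a)))
            = (qint (n+a) * qbinom (2*n) (n-a)) *
              (X^(∑ s ∈ range (t'+1), s) * X^(t'+1) * X^(j*(((n-(t'+1))-a) + a^2)) *
                qint ((n-(t'+1))+a) * qint (n-a) *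
                ∏ s ∈ range t', (qint (n+a-(s+1)) * qint (n-a-(s+1)))) := by
          calc _ = (X^(∑ s ∈ range (t'+1), s) * X^(t'+1) * X^(j*(((n-(t'+1))-a) + a^2)) *
                qint ((n-(t'+1))+a)) *
                ((∏ i ∈ range (2*(t'+1)), qint (2*n - i)) *
                  qbinom (2*(n-(t'+1))) ((n-(t'+1))-a)) := by ring
            _ = (X^(∑ s ∈ range (t'+1), s) * X^(t'+1) * X^(j*(((n-(t'+1))-a) + a^2)) *
                qint ((n-(t'+1))+a)) *
                ((∏ s ∈ range (t'+1), (qint (n+a-s) * qint (n-a-s))) *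
                  qbinom (2*n) (n-a)) := by rw [hBa]
            _ = _ := by
                rw [Finset.prod_range_succ' (fun s => qint (n+a-s) * qint (n-a-s)) t']
                simp only [Nat.sub_zero]
                ring
        rw [key]
        exact dvd_mul_right _ _
  rw [← Finset.mul_sum]
  exact inner.mul_left _
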